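/- Let (T(t)) be a C₀-semigroup on a Banach space E with generator (A,dom(A)), 0 ∈ ρ(A), and extrapolation data (E₋₁,ι,T₋₁,A₋₁), and let (𝒰(t)) be the semigroup on 𝓛(E) left implemented by (T(t)), with extrapolated semigroup 𝒰₋₁(t)S := T₋₁(t)∘S on 𝓛(E,E₋₁). Fix α ∈ [0,1]. For B ∈ 𝓛(E,E₋₁) define 𝒦 : 𝓛(E) → 𝓛(E,E₋₁) by 𝒦(C) := B∘C. Then Ran(𝒦) ⊆ F_α(𝒰) if and only if Ran(B) ⊆ F_α(T). Here, for α ∈ (0,1]: Ran(B) ⊆ F_α(T) means that for every x ∈ E there is y ∈ E with Bx = ιy and sup_{s∈(0,1)} ‖T(s)y−y‖/s^α < ∞, and Ran(𝒦) ⊆ F_α(𝒰) is the analogous condition for 𝒰 on 𝓛(E); for α = 0: Ran(B) ⊆ F₀(T) means sup_{s∈(0,1)} ‖T₋₁(s)(Bx)−Bx‖_{E₋₁}/s < ∞ for every x ∈ E, and Ran(𝒦) ⊆ F₀(𝒰) means sup_{s∈(0,1)} ‖𝒰₋₁(s)(𝒦C)−𝒦C‖_{𝓛(E,E₋₁)}/s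 < ∞ for every C ∈ 𝓛(E). -/

import Mathlib

/-!
Since `𝒰(s)C - C = (T(s) - 1) ∘ C`, a Favard bound on every `B ∘ C` with `C = Id` is a pointwise
Favard bound on the range of `B`. Conversely, the uniform boundedness principle turns pointwise
bounds `‖(T(s) - 1)(Bx)‖ ≤ M_x s^α` into an operator bound `‖(T(s) - 1) ∘ B‖ ≤ M s^α`, which
survives composition with any `C`. For `α > 0` the operator `B` first has to be lifted through
`ι`; the lift `ι⁻¹ ∘ B` is bounded by the closed graph theorem.
-/

open Set Filter Topology MeasureTheory

variable {E E₁ : Type*} [NormedAddCommGroup E] [NormedSpace ℝ E]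
  [NormedAddCommGroup E₁] [NormedSpace ℝ E₁]

/-- A `C₀`-semigroup on a Banach space `E`. -/
structure IsC0Semigroup (T : ℝ → E →L[ℝ] E) : Prop where
  map_zero : T 0 = 1
  map_add : ∀ s t : ℝ, 0 ≤ s → 0 ≤ t → T (s + t) = (T s).comp (T t)
  strongCont : ∀ x : E, ContinuousOn (fun t => T t x) (Ici (0:ℝ))

/-- The generator relation of a `C₀`-semigroup: `y = Ax`. -/
def C0GenRel (T : ℝ → E →L[ℝ] E) (x y : E) : Prop :=
  Tendsto (fun t : ℝ => t⁻¹ • (T t x - x)) (nhdsWithin 0 (Ioi 0)) (nhds y)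

/-- Extrapolation data `(E₋₁, ι, T₋₁, A₋₁)` for a `C₀`-semigroup `T` with `0 ∈ ρ(A)`:
`ι : E → E₋₁` is a continuous dense injection, `T₋₁` a `C₀`-semigroup on `E₋₁` extending `T`
via `ι`, whose generator `A₋₁` has domain `ι(E)`, extends `A`, and `Am = A₋₁ ∘ ι : E → E₋₁`
is an isomorphism. -/
structure ExtrapolationData (T : ℝ → E →L[ℝ] E) (T₁ : ℝ → E₁ →L[ℝ] E₁)
    (ι : E →L[ℝ] E₁) (Am : E ≃L[ℝ] E₁) : Prop where
  c0T : IsC0Semigroup T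
  c0T₁ : IsC0Semigroup T₁
  inj : Function.Injective ι
  dense : DenseRange ι
  intertwine : ∀ t : ℝ, 0 ≤ t → ∀ x : E, T₁ t (ι x) = ι (T t x)
  gen₁ : ∀ x : E, C0GenRel T₁ (ι x) (Am x)
  gen₁_dom : ∀ z y : E₁, C0GenRel T₁ z y → z ∈ Set.range ι
  gen_extends : ∀ x y : E, C0GenRel T x y → (Am x : E₁) = ι y
  zero_res : ∃ R : E →L[ℝ] E, (∀ y : E, C0GenRel T (R y) y) ∧
    ∀ x y : E, C0GenRel T x y → x = R y

/-- The Desch–Schappacher admissibility class `𝒮^{DS}_{t₀}(T)` for a `C₀`-semigroup: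
for every strongly continuous `𝓛(E)`-valued `F` the Volterra integrals take values in `ι(E)`,
give a strongly continuous `𝓛(E)`-valued function `V_B F`, and `‖V_B‖ ≤ q < 1`. -/
def MemSDS (T₁ : ℝ → E₁ →L[ℝ] E₁) (ι : E →L[ℝ] E₁) (B : E →L[ℝ] E₁) (t₀ : ℝ) : Prop :=
  ∃ q : ℝ, 0 ≤ q ∧ q < 1 ∧
    ∀ F : ℝ → E →L[ℝ] E, (∀ x : E, ContinuousOn (fun r => F r x) (Icc (0:ℝ) t₀)) →
      ∃ G : ℝ → E →L[ℝ] E,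
        (∀ t ∈ Icc (0:ℝ) t₀, ∀ x : E,
          ι (G t x) = ∫ r in (0:ℝ)..t, T₁ (t - r) (B (F r x))) ∧
        (∀ x : E, ContinuousOn (fun t => G t x) (Icc (0:ℝ) t₀)) ∧
        ∀ c : ℝ, (∀ s ∈ Icc (0:ℝ) t₀, ‖F s‖ ≤ c) → ∀ t ∈ Icc (0:ℝ) t₀, ‖G t‖ ≤ q * c

/-- The semigroup on `𝓛(E)` left implemented by `T`: `𝒰(t)C := T(t) ∘ C`. -/
noncomputable def implemented (T : ℝ → E →L[ℝ] E) (t : ℝ) :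
    (E →L[ℝ] E) →L[ℝ] (E →L[ℝ] E) :=
  ContinuousLinearMap.compL ℝ E E E (T t)

/-- The extrapolated implemented semigroup on `𝓛(E,E₋₁)`: `𝒰₋₁(t)S := T₋₁(t) ∘ S`. -/
noncomputable def implementedExt (T₁ : ℝ → E₁ →L[ℝ] E₁) (t : ℝ) :
    (E →L[ℝ] E₁) →L[ℝ] (E →L[ℝ] E₁) :=
  ContinuousLinearMap.compL ℝ E E₁ E₁ (T₁ t)

/-- Membership in the space `𝔛_{t₀}` of strongly `τ_sot`-continuous, norm-bounded,
bi-equicontinuous functions `F : [0,t₀] → 𝓛(𝓛(E))`. -/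
def MemXsot (t₀ : ℝ) (F : ℝ → (E →L[ℝ] E) →L[ℝ] (E →L[ℝ] E)) : Prop :=
  (∀ (C : E →L[ℝ] E) (x : E), ContinuousOn (fun t => (F t C) x) (Icc (0:ℝ) t₀)) ∧
  (∃ M : ℝ, ∀ t ∈ Icc (0:ℝ) t₀, ‖F t‖ ≤ M) ∧
  ∀ u : ℕ → E →L[ℝ] E, (∃ c : ℝ, ∀ n, ‖u n‖ ≤ c) →
    (∀ x : E, Tendsto (fun n => u n x) atTop (nhds (0:E))) →
    ∀ x : E, ∀ ε > (0:ℝ), ∃ N : ℕ, ∀ n ≥ N, ∀ t ∈ Icc (0:ℝ) t₀, ‖(F t (u n)) x‖ < ε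

/-- The Desch–Schappacher admissibility class `𝒮^{DS,τ_sot}_{t₀}(𝒰)` for the implemented
semigroup: `𝒦 : 𝓛(E) → 𝓛(E,E₋₁)` is `τ_sot`-to-`τ_sot` continuous, and the Volterra operator
`(V_𝒦 F)(t)C = ∫₀ᵗ 𝒰₋₁(t-r) 𝒦(F(r)C) dr` takes values in `𝓛(E)`, maps `𝔛_{t₀}` into itself
and has `‖V_𝒦‖ ≤ q < 1`. -/
def MemSDSsot (T₁ : ℝ → E₁ →L[ℝ] E₁) (ι : E →L[ℝ] E₁)
    (K : (E →L[ℝ] E) →L[ℝ] (E →L[ℝ] E₁)) (t₀ : ℝ) : Prop :=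
  (∀ x : E, ∃ (v : Finset E) (c : ℝ), 0 ≤ c ∧
      ∀ S : E →L[ℝ] E, ‖(K S) x‖ ≤ c * ∑ y ∈ v, ‖S y‖) ∧
  ∃ q : ℝ, 0 ≤ q ∧ q < 1 ∧
    ∀ F : ℝ → (E →L[ℝ] E) →L[ℝ] (E →L[ℝ] E), MemXsot t₀ F →
      ∃ G : ℝ → (E →L[ℝ] E) →L[ℝ] (E →L[ℝ] E), MemXsot t₀ G ∧
        (∀ t ∈ Icc (0:ℝ) t₀, ∀ (C : E →L[ℝ] E) (x : E),
          ι ((G t C) x) = ∫ r in (0:ℝ)..t, T₁ (t - r) ((K (F r C)) x)) ∧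
        ∀ c : ℝ, (∀ s ∈ Icc (0:ℝ) t₀, ‖F s‖ ≤ c) → ∀ t ∈ Icc (0:ℝ) t₀, ‖G t‖ ≤ q * c

/-- A `τ_sot`-bi-continuous semigroup on `𝓛(E)`. -/
structure IsBiContSotSemigroup (U : ℝ → (E →L[ℝ] E) →L[ℝ] (E →L[ℝ] E)) : Prop where
  map_zero : U 0 = 1
  map_add : ∀ s t : ℝ, 0 ≤ s → 0 ≤ t → U (s + t) = (U s).comp (U t)
  strongCont : ∀ (C : E →L[ℝ] E) (x : E), ContinuousOn (fun t => (U t C) x) (Ici (0:ℝ))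
  expBound : ∃ M : ℝ, 1 ≤ M ∧ ∃ ω : ℝ, ∀ t : ℝ, 0 ≤ t → ‖U t‖ ≤ M * Real.exp (ω * t)
  biequi : ∀ t₀ : ℝ, 0 < t₀ → ∀ u : ℕ → E →L[ℝ] E, (∃ c : ℝ, ∀ n, ‖u n‖ ≤ c) →
    (∀ x : E, Tendsto (fun n => u n x) atTop (nhds (0:E))) →
    ∀ x : E, ∀ ε > (0:ℝ), ∃ N : ℕ, ∀ n ≥ N, ∀ t ∈ Icc (0:ℝ) t₀, ‖(U t (u n)) x‖ < ε

/-- The generator relation of a `τ_sot`-bi-continuous semigroup on `𝓛(E)`. -/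
def SotGenRel (U : ℝ → (E →L[ℝ] E) →L[ℝ] (E →L[ℝ] E)) (C Y : E →L[ℝ] E) : Prop :=
  (∀ x : E, Tendsto (fun t : ℝ => t⁻¹ • ((U t C) x - C x))
      (nhdsWithin 0 (Ioi 0)) (nhds (Y x))) ∧
    ∃ M : ℝ, ∀ t ∈ Ioc (0:ℝ) 1, ‖U t C - C‖ ≤ M * t

/-- `V` is a `τ_sot`-bi-continuous semigroup on `𝓛(E)` generated by `(𝒢₋₁ + 𝒦)|_{𝓛(E)}`,
where `𝒢₋₁ C = A₋₁ ∘ ι ∘ C` and the domain is `{C : 𝒢₋₁C + 𝒦C ∈ 𝓛(E)}`. -/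
def GeneratedByPerturbedImpl (V : ℝ → (E →L[ℝ] E) →L[ℝ] (E →L[ℝ] E))
    (ι : E →L[ℝ] E₁) (Am : E ≃L[ℝ] E₁)
    (K : (E →L[ℝ] E) →L[ℝ] (E →L[ℝ] E₁)) : Prop :=
  IsBiContSotSemigroup V ∧ ∀ C Y : E →L[ℝ] E,
    SotGenRel V C Y ↔ ι.comp Y = ((Am : E →L[ℝ] E₁)).comp C + K C

theorem ContinuousLinearMap.exists_comp_eq_of_range_subset {𝕜 E F G : Type*}
    [NontriviallyNormedField 𝕜]
    [NormedAddCommGroup E] [NormedSpace 𝕜 E] [CompleteSpace E]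
    [NormedAddCommGroup F] [NormedSpace 𝕜 F] [CompleteSpace F]
    [NormedAddCommGroup G] [NormedSpace 𝕜 G]
    {ι : F →L[𝕜] G} (hι : Function.Injective ι) {B : E →L[𝕜] G}
    (hB : range B ⊆ range ι) : ∃ P : E →L[𝕜] F, ι.comp P = B := by
  let P : E →ₗ[𝕜] F := (LinearEquiv.ofInjective ι.toLinearMap hι).symm.toLinearMap ∘ₗ
    B.toLinearMap.codRestrict (LinearMap.range ι.toLinearMap) fun x => hB ⟨x, rfl⟩
  have hP : ∀ x, ι (P x) = B x := fun x =>
    (LinearEquiv.ofInjective_apply _ _).symm.trans <| congrArg Subtype.val <|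
      (LinearEquiv.ofInjective ι.toLinearMap hι).apply_symm_apply ⟨B x, hB ⟨x, rfl⟩⟩
  refine ⟨⟨P, P.continuous_of_seq_closed_graph fun u x y hu hPu => hι ?_⟩, ext hP⟩
  refine tendsto_nhds_unique ((ι.continuous.tendsto y).comp hPu) ?_
  simpa only [hP, Function.comp_def] using (B.continuous.tendsto x).comp hu

theorem exists_norm_le_mul_of_forall_norm_apply_le {I E F : Type*}
    [NormedAddCommGroup E] [NormedSpace ℝ E] [CompleteSpace E]
    [NormedAddCommGroup F] [NormedSpace ℝ F]
    {g : I → E →L[ℝ] F} {w : I → ℝ} {s : Set I} (hw : ∀ i ∈ s, 0 < w i)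
    (h : ∀ x, ∃ M, ∀ i ∈ s, ‖g i x‖ ≤ M * w i) : ∃ M, ∀ i ∈ s, ‖g i‖ ≤ M * w i := by
  obtain ⟨M, hM⟩ := banach_steinhaus (g := fun i : s => (w i)⁻¹ • g i) fun x => by
    obtain ⟨M, hM⟩ := h x
    refine ⟨M, fun i => ?_⟩
    have hwi := hw i i.2
    rw [smul_apply, norm_smul, norm_inv, Real.norm_of_nonneg hwi.le,
      inv_mul_le_iff₀ hwi, mul_comm]
    exact hM i i.2
  refine ⟨M, fun i hi => ?_⟩
  have hwi := hw i hi
  have := hM ⟨i, hi⟩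
  rwa [norm_smul, norm_inv, Real.norm_of_nonneg hwi.le, inv_mul_le_iff₀ hwi, mul_comm] at this

theorem forall_exists_norm_comp_comp_le_iff {E F : Type*}
    [NormedAddCommGroup E] [NormedSpace ℝ E] [CompleteSpace E]
    [NormedAddCommGroup F] [NormedSpace ℝ F]
    (D : ℝ → F →L[ℝ] F) (S : E →L[ℝ] F) {w : ℝ → ℝ} {s : Set ℝ} (hw : ∀ t ∈ s, 0 < w t) :
    (∀ C : E →L[ℝ] E, ∃ M, ∀ t ∈ s, ‖(D t).comp (S.comp C)‖ ≤ M * w t) ↔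
      ∀ x, ∃ M, ∀ t ∈ s, ‖D t (S x)‖ ≤ M * w t := by
  constructor
  · intro h x
    obtain ⟨M, hM⟩ := h 1
    refine ⟨M * ‖x‖, fun t ht => ?_⟩
    calc ‖D t (S x)‖ = ‖(D t).comp (S.comp 1) x‖ := rfl
      _ ≤ M * w t * ‖x‖ := ContinuousLinearMap.le_of_opNorm_le _ (hM t ht) x
      _ = M * ‖x‖ * w t := mul_right_comm _ _ _
  · intro h C
    obtain ⟨M, hM⟩ := exists_norm_le_mul_of_forall_norm_apply_le (g := fun t => (D t).comp S) hw h
    refine ⟨M * ‖C‖, fun t ht => ?_⟩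
    calc ‖(D t).comp (S.comp C)‖ = ‖((D t).comp S).comp C‖ := rfl
      _ ≤ M * w t * ‖C‖ :=
          (ContinuousLinearMap.opNorm_comp_le _ _).trans <|
            mul_le_mul_of_nonneg_right (hM t ht) (norm_nonneg _)
      _ = M * ‖C‖ * w t := mul_right_comm _ _ _

theorem implemented_sub_self (T : ℝ → E →L[ℝ] E) (t : ℝ) (C : E →L[ℝ] E) :
    implemented T t C - C = (T t - 1).comp C := by
  ext; simp [implemented]

theorem implementedExt_sub_self (T₁ : ℝ → E₁ →L[ℝ] E₁) (t : ℝ) (S : E →L[ℝ] E₁) :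
    implementedExt T₁ t S - S = (T₁ t - 1).comp S := by
  ext; simp [implementedExt]

theorem forall_exists_comp_eq_and_norm_implemented_sub_le_iff [CompleteSpace E]
    {ι : E →L[ℝ] E₁} (hι : Function.Injective ι) {P : E →L[ℝ] E} {B : E →L[ℝ] E₁}
    (hP : ι.comp P = B) (T : ℝ → E →L[ℝ] E) {w : ℝ → ℝ} {s : Set ℝ}
    (hw : ∀ t ∈ s, 0 < w t) :
    (∀ C : E →L[ℝ] E, ∃ Y : E →L[ℝ] E, ContinuousLinearMap.compL ℝ E E E₁ B C = ι.comp Y ∧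
        ∃ M, ∀ t ∈ s, ‖implemented T t Y - Y‖ ≤ M * w t) ↔
      ∀ x, ∃ y, B x = ι y ∧ ∃ M, ∀ t ∈ s, ‖T t y - y‖ ≤ M * w t := by
  have hY : ∀ C Y : E →L[ℝ] E, ContinuousLinearMap.compL ℝ E E E₁ B C = ι.comp Y ↔
      Y = P.comp C := fun C Y => by
    rw [← hP, eq_comm]
    exact ⟨fun h => ContinuousLinearMap.ext fun x => hι (congrArg (· x) h), by rintro rfl; rfl⟩
  have hy : ∀ x y, B x = ι y ↔ y = P x := fun x y => by
    rw [← hP, eq_comm]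
    exact hι.eq_iff
  simp only [hY, hy, exists_eq_left, implemented_sub_self]
  exact forall_exists_norm_comp_comp_le_iff (fun t => T t - 1) P hw

theorem stmt_11_general [CompleteSpace E]
    (T : ℝ → E →L[ℝ] E) (T₁ : ℝ → E₁ →L[ℝ] E₁) (ι : E →L[ℝ] E₁) (Am : E ≃L[ℝ] E₁)
    (hExt : ExtrapolationData T T₁ ι Am)
    (α : ℝ) (B : E →L[ℝ] E₁) :
    (0 < α →
      ((∀ C : E →L[ℝ] E, ∃ Y : E →L[ℝ] E,
          (ContinuousLinearMap.compL ℝ E E E₁ B) C = ι.comp Y ∧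
          ∃ M : ℝ, ∀ s ∈ Ioo (0:ℝ) 1, ‖implemented T s Y - Y‖ ≤ M * s ^ α) ↔
        (∀ x : E, ∃ y : E, B x = ι y ∧
          ∃ M : ℝ, ∀ s ∈ Ioo (0:ℝ) 1, ‖T s y - y‖ ≤ M * s ^ α))) ∧
    (α = 0 →
      ((∀ C : E →L[ℝ] E, ∃ M : ℝ, ∀ s ∈ Ioo (0:ℝ) 1,
          ‖implementedExt T₁ s ((ContinuousLinearMap.compL ℝ E E E₁ B) C) -
              (ContinuousLinearMap.compL ℝ E E E₁ B) C‖ ≤ M * s) ↔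
        (∀ x : E, ∃ M : ℝ, ∀ s ∈ Ioo (0:ℝ) 1, ‖T₁ s (B x) - B x‖ ≤ M * s))) := by
  refine ⟨fun _ => ?_, fun _ => ?_⟩
  · have key (P : E →L[ℝ] E) (hP : ι.comp P = B) :=
      forall_exists_comp_eq_and_norm_implemented_sub_le_iff hExt.inj hP T
        (w := fun s => s ^ α) (s := Ioo 0 1) fun s hs => Real.rpow_pos_of_pos hs.1 α
    constructor
    · intro h
      obtain ⟨P, hP, -⟩ := h 1
      exact (key P hP.symm).mp h
    · intro h
      obtain ⟨P, hP⟩ := ContinuousLinearMap.exists_comp_eq_of_range_subset hExt.inj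
        (B := B) fun _ ⟨x, hx⟩ => (h x).imp fun y hy => hx ▸ hy.1.symm
      exact (key P hP).mpr h
  · simp only [implementedExt_sub_self, ContinuousLinearMap.compL_apply]
    exact forall_exists_norm_comp_comp_le_iff (fun s => T₁ s - 1) B fun s hs => hs.1

/-- For `B ∈ 𝓛(E,E₋₁)` and the multiplication operator `𝒦(C) = B∘C`,
the range of `𝒦` lies in the Favard space `F_α(𝒰)` iff the range of `B` lies in `F_α(T)`;
for `α ∈ (0,1]` via the Favard space of the semigroup itself, for `α = 0` via the
extrapolated Favard class. -/
theorem stmt_11 [CompleteSpace E] [CompleteSpace E₁]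
    (T : ℝ → E →L[ℝ] E) (T₁ : ℝ → E₁ →L[ℝ] E₁) (ι : E →L[ℝ] E₁) (Am : E ≃L[ℝ] E₁)
    (hExt : ExtrapolationData T T₁ ι Am)
    (α : ℝ) (hα : α ∈ Icc (0:ℝ) 1) (B : E →L[ℝ] E₁) :
    (0 < α →
      ((∀ C : E →L[ℝ] E, ∃ Y : E →L[ℝ] E,
          (ContinuousLinearMap.compL ℝ E E E₁ B) C = ι.comp Y ∧
          ∃ M : ℝ, ∀ s ∈ Ioo (0:ℝ) 1, ‖implemented T s Y - Y‖ ≤ M * s ^ α) ↔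
        (∀ x : E, ∃ y : E, B x = ι y ∧
          ∃ M : ℝ, ∀ s ∈ Ioo (0:ℝ) 1, ‖T s y - y‖ ≤ M * s ^ α))) ∧
    (α = 0 →
      ((∀ C : E →L[ℝ] E, ∃ M : ℝ, ∀ s ∈ Ioo (0:ℝ) 1,
          ‖implementedExt T₁ s ((ContinuousLinearMap.compL ℝ E E E₁ B) C) -
              (ContinuousLinearMap.compL ℝ E E E₁ B) C‖ ≤ M * s) ↔
        (∀ x : E, ∃ M : ℝ, ∀ s ∈ Ioo (0:ℝ) 1, ‖T₁ s (B x) - B x‖ ≤ M * s))) :=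
  stmt_11_general T T₁ ι Am hExt α B
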